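/- Let 𝒴(4) ⊆ ℂ⁸ be the set of tuples (q,Q,e,b_0,b_1,b_2,b_3,b_4) satisfying, for all 1 ≤ j ≤ k ≤ 3: e·b_j = q·b_{j+1} + Q·b_{j−1} and b_j·b_k − b_{j−1}·b_{k+1} = q^{3−k}·Q^{j−1}·Ψ_{k−j}(q,Q,e). Then there exists a ℂ-linear map L : ℂ⁸ → Mat₃(ℂ) (the space of 3×3 complex matrices) whose restriction to 𝒴(4) is a bijection from 𝒴(4) onto {A ∈ Mat₃(ℂ) | A·A = 0}, the closure of the minimal nilpotent orbit of 𝔰𝔩₃. -/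

import Mathlib

/-- The sequence `Ψ_m(q,Q,e)`: `Ψ 0 = 1`, `Ψ 1 = e`, `Ψ m = e·Ψ (m−1) − qQ·Ψ (m−2)`. -/
noncomputable def PsiC (p e : ℂ) : ℕ → ℂ
  | 0 => 1
  | 1 => e
  | m + 2 => e * PsiC p e (m + 1) - p * PsiC p e m

/-- The `i`-th coordinate of a point of `ℂ^(d+4)`
(`i = 0` is `q`, `i = 1` is `Q`, `i = 2` is `e`, `i = 3+j` is `b_j` for `0 ≤ j ≤ d`). -/
noncomputable def coord {d : ℕ} (v : Fin (d + 4) → ℂ) (i : ℕ) : ℂ :=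
  if h : i < d + 4 then v ⟨i, h⟩ else 0

/-- The variety `𝒴(d) ⊆ ℂ^(d+4)`. -/
def Yset (d : ℕ) : Set (Fin (d + 4) → ℂ) :=
  {v | ∀ j k : ℕ, 1 ≤ j → j ≤ k → k ≤ d - 1 →
    coord v 2 * coord v (3 + j) =
        coord v 0 * coord v (3 + (j + 1)) + coord v 1 * coord v (3 + (j - 1)) ∧
    coord v (3 + j) * coord v (3 + k) - coord v (3 + (j - 1)) * coord v (3 + (k + 1)) =
      coord v 0 ^ (d - k - 1) * coord v 1 ^ (j - 1) *
        PsiC (coord v 0 * coord v 1) (coord v 2) (k - j)}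

/-!
The linear map `L = yToMatrix` is an isomorphism of `ℂ⁸` onto the traceless `3 × 3` matrices, and
the nine entries of `L(v)²` are invertible linear combinations of the nine equations cutting out
`𝒴(4)` (three recurrences and six quadratic relations). So `L` maps `𝒴(4)` bijectively onto the
traceless matrices of square zero, and a matrix of square zero is nilpotent, hence traceless.
-/

theorem Matrix.trace_eq_zero_of_mul_self_eq_zero {n R : Type*} [Fintype n] [DecidableEq n]
    [CommRing R] [IsReduced R] {A : Matrix n n R} (hA : A * A = 0) : A.trace = 0 :=
  (Matrix.isNilpotent_trace_of_isNilpotent ⟨2, by rw [sq, hA]⟩).eq_zero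

theorem mem_Yset_four_iff (v : Fin (4 + 4) → ℂ) :
    v ∈ Yset 4 ↔
      (v 2 * v 4 = v 0 * v 5 + v 1 * v 3 ∧
        v 2 * v 5 = v 0 * v 6 + v 1 * v 4 ∧
        v 2 * v 6 = v 0 * v 7 + v 1 * v 5) ∧
      (v 4 * v 4 - v 3 * v 5 = v 0 ^ 2 ∧
        v 4 * v 5 - v 3 * v 6 = v 0 * v 2 ∧
        v 4 * v 6 - v 3 * v 7 = v 2 * v 2 - v 0 * v 1 ∧
        v 5 * v 5 - v 4 * v 6 = v 0 * v 1 ∧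
        v 5 * v 6 - v 4 * v 7 = v 1 * v 2 ∧
        v 6 * v 6 - v 5 * v 7 = v 1 ^ 2) := by
  constructor
  · intro hv
    have h11 := hv 1 1 le_rfl le_rfl (by norm_num)
    have h12 := hv 1 2 le_rfl (by norm_num) (by norm_num)
    have h13 := hv 1 3 le_rfl (by norm_num) (by norm_num)
    have h22 := hv 2 2 (by norm_num) le_rfl (by norm_num)
    have h23 := hv 2 3 (by norm_num) (by norm_num) (by norm_num)
    have h33 := hv 3 3 (by norm_num) le_rfl (by norm_num)
    simp only [coord, PsiC, Nat.reduceAdd, Nat.reduceSub, Nat.reduceLT, Nat.ofNat_pos,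
      Nat.one_lt_ofNat, Nat.lt_add_one, Nat.add_one_sub_one, tsub_self, ↓reduceDIte, Fin.reduceFinMk,
      Fin.isValue, Fin.zero_eta, Fin.mk_one, add_zero, pow_zero, pow_one, mul_one, one_mul]
      at h11 h12 h13 h22 h23 h33
    exact ⟨⟨h11.1, h22.1, h33.1⟩, h11.2, h12.2, h13.2, h22.2, h23.2, h33.2⟩
  · rintro ⟨⟨e1, e2, e3⟩, f11, f12, f13, f22, f23, f33⟩ j k hj hjk hk
    replace hk : k ≤ 3 := hk
    interval_cases k <;> interval_cases j <;> simp [coord, PsiC, *]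

noncomputable def yToMatrix : (Fin (4 + 4) → ℂ) →ₗ[ℂ] Matrix (Fin 3) (Fin 3) ℂ where
  toFun v :=
    !![v 5 + v 2, -2 * (v 4 + v 0), v 3;
       v 6 + v 1, -2 * v 5, v 4 - v 0;
       v 7, -2 * (v 6 - v 1), v 5 - v 2]
  map_add' x y := by
    ext i j
    fin_cases i <;> fin_cases j <;> simp <;> ring
  map_smul' c x := by
    ext i j
    fin_cases i <;> fin_cases j <;> simp <;> ring

noncomputable def matrixToY (A : Matrix (Fin 3) (Fin 3) ℂ) : Fin (4 + 4) → ℂ :=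
  ![(-A 0 1 / 2 - A 1 2) / 2, (A 1 0 + A 2 1 / 2) / 2, (A 0 0 - A 2 2) / 2, A 0 2,
    (A 1 2 - A 0 1 / 2) / 2, -A 1 1 / 2, (A 1 0 - A 2 1 / 2) / 2, A 2 0]

theorem matrixToY_yToMatrix (v : Fin (4 + 4) → ℂ) : matrixToY (yToMatrix v) = v := by
  ext i
  fin_cases i <;> simp [matrixToY, yToMatrix] <;> ring

theorem yToMatrix_injective : Function.Injective yToMatrix :=
  Function.LeftInverse.injective matrixToY_yToMatrix

theorem yToMatrix_matrixToY {A : Matrix (Fin 3) (Fin 3) ℂ} (hA : A.trace = 0) :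
    yToMatrix (matrixToY A) = A := by
  have hA11 : A 1 1 = -(A 0 0 + A 2 2) := by
    rw [Matrix.trace_fin_three] at hA
    linear_combination hA
  ext i j
  fin_cases i <;> fin_cases j <;> simp [matrixToY, yToMatrix, hA11] <;> ring

theorem yToMatrix_mul_self_eq_zero_iff (v : Fin (4 + 4) → ℂ) :
    yToMatrix v * yToMatrix v = 0 ↔ v ∈ Yset 4 := by
  rw [mem_Yset_four_iff]
  constructor
  · intro h
    have entry (i j : Fin 3) : (yToMatrix v * yToMatrix v) i j = 0 := by rw [h, Matrix.zero_apply]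
    have m00 := entry 0 0
    have m01 := entry 0 1
    have m02 := entry 0 2
    have m10 := entry 1 0
    have m11 := entry 1 1
    have m12 := entry 1 2
    have m20 := entry 2 0
    have m21 := entry 2 1
    have m22 := entry 2 2
    simp only [yToMatrix, LinearMap.coe_mk, AddHom.coe_mk, Matrix.mul_apply, Fin.sum_univ_three,
      Matrix.of_apply, Matrix.cons_val', Matrix.cons_val_fin_one, Matrix.cons_val_zero,
      Matrix.cons_val_one, Matrix.cons_val, Nat.reduceAdd, Fin.isValue]
      at m00 m01 m02 m10 m11 m12 m20 m21 m22
    refine ⟨⟨?_, ?_, ?_⟩, ?_, ?_, ?_, ?_, ?_, ?_⟩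
    · linear_combination -m01 / 4 - m12 / 2
    · linear_combination (m00 - m22) / 4
    · linear_combination m10 / 2 + m21 / 4
    · linear_combination -m02 / 2
    · linear_combination m01 / 4 - m12 / 2
    · linear_combination m11 / 4 - m00 / 2 - m22 / 2
    · linear_combination m11 / 4
    · linear_combination m21 / 4 - m10 / 2
    · linear_combination -m20 / 2
  · rintro ⟨⟨e1, e2, e3⟩, f11, f12, f13, f22, f23, f33⟩
    ext i j
    fin_cases i <;> fin_cases j <;>
      simp only [yToMatrix, LinearMap.coe_mk, AddHom.coe_mk, Matrix.mul_apply, Fin.sum_univ_three,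
        Matrix.of_apply, Matrix.cons_val', Matrix.cons_val_fin_one, Matrix.cons_val_zero,
        Matrix.cons_val_one, Matrix.cons_val, Matrix.zero_apply, Nat.reduceAdd, Fin.isValue,
        Fin.zero_eta, Fin.mk_one, Fin.reduceFinMk]
    · linear_combination 2 * e2 - f13 + f22
    · linear_combination -2 * e1 + 2 * f12
    · linear_combination -2 * f11
    · linear_combination e3 - f23
    · linear_combination 4 * f22
    · linear_combination -e1 - f12
    · linear_combination -2 * f33
    · linear_combination 2 * e3 + 2 * f23
    · linear_combination -2 * e2 - f13 + f22

/-- There is a `ℂ`-linear map `L : ℂ⁸ → Mat₃(ℂ)` restricting to a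
bijection from `𝒴(4)` onto `{A ∈ Mat₃(ℂ) | A·A = 0}`, the closure of the minimal
nilpotent orbit of `𝔰𝔩₃`. -/
theorem stmt_14 :
    ∃ L : (Fin (4 + 4) → ℂ) →ₗ[ℂ] Matrix (Fin 3) (Fin 3) ℂ,
      Set.BijOn L (Yset 4) {A : Matrix (Fin 3) (Fin 3) ℂ | A * A = 0} := by
  refine ⟨yToMatrix, fun v hv ↦ (yToMatrix_mul_self_eq_zero_iff v).2 hv,
    yToMatrix_injective.injOn, ?_⟩
  intro A (hA : A * A = 0)
  have hsection := yToMatrix_matrixToY (Matrix.trace_eq_zero_of_mul_self_eq_zero hA)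
  refine ⟨matrixToY A, ?_, hsection⟩
  rwa [← yToMatrix_mul_self_eq_zero_iff, hsection]
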